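/- In the CL-preferential model M' constructed from a loop-cumulative model M as above: a state s is in Min_<(A) (among states, under ⊫) if and only if (s,w) ∈ Min_{<'}(LA) in M', for every w ∈ l(s). -/
import Mathlib


/-- Propositional formulas over atoms `α`. -/
inductive PForm (α : Type) : Type
  | atom : α → PForm α
  | neg : PForm α → PForm α
  | conj : PForm α → PForm α → PForm α
  | disj : PForm α → PForm α → PForm α

/-- Truth of a propositional formula at a world, given a valuation. -/
def PForm.sat {α W : Type} (V : W → α → Prop) : W → PForm α → Prop
  | w, .atom a => V w a
  | w, .neg A => ¬ PForm.sat V w A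
  | w, .conj A B => PForm.sat V w A ∧ PForm.sat V w B
  | w, .disj A B => PForm.sat V w A ∨ PForm.sat V w B

/-- `minW lt S w` : `w` is a `lt`-minimal world satisfying `S`. -/
def minW {W : Type} (lt : W → W → Prop) (S : W → Prop) (w : W) : Prop :=
  S w ∧ ∀ w', lt w' w → ¬ S w'

/-- Truth of a propositional formula at a state: true in all its worlds. -/
def stateSat {α S W : Type} (l : S → Set W) (V : W → α → Prop)
    (s : S) (A : PForm α) : Prop :=
  ∀ w ∈ l s, PForm.sat V w A

/-- A loop-cumulative model. -/
structure LCModel (α : Type) where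
  S : Type
  W : Type
  l : S → Set W
  lt : S → S → Prop
  V : W → α → Prop
  l_ne : ∀ s, (l s).Nonempty
  irrefl : Irreflexive lt
  trans : Transitive lt
  smooth : ∀ (A : PForm α) (s : S), stateSat l V s A →
      minW lt (fun s' => stateSat l V s' A) s ∨
        ∃ s', minW lt (fun s'' => stateSat l V s'' A) s' ∧ lt s' s

/-- `LA` holds at `w`: `A` holds at all `R`-successors of `w`. -/
def Lsat {α W : Type} (R : W → W → Prop) (V : W → α → Prop)
    (w : W) (A : PForm α) : Prop :=
  ∀ w', R w w' → PForm.sat V w' A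

/-- The worlds of the CL-preferential model constructed from a loop-cumulative
model: pairs `(s, w)` with `w ∈ l(s)`. -/
def Wc {α : Type} (M : LCModel α) : Type := {p : M.S × M.W // p.2 ∈ M.l p.1}

/-- The accessibility relation of the constructed model. -/
def Rc {α : Type} (M : LCModel α) : Wc M → Wc M → Prop := fun p q => p.1.1 = q.1.1

/-- The preference relation of the constructed model, induced by `<` on
states. -/
def ltc {α : Type} (M : LCModel α) : Wc M → Wc M → Prop := fun p q => M.lt p.1.1 q.1.1

/-- The valuation of the constructed model. -/
def Vc {α : Type} (M : LCModel α) : Wc M → α → Prop := fun p => M.V p.1.2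


lemma sat_Vc {α : Type} (M : LCModel α) (q : Wc M) (A : PForm α) :
    PForm.sat (Vc M) q A ↔ PForm.sat M.V q.1.2 A := by
  induction A with
  | atom a => exact Iff.rfl
  | neg A ih => exact not_congr ih
  | conj A B ihA ihB => exact and_congr ihA ihB
  | disj A B ihA ihB => exact or_congr ihA ihB

lemma Lsat_iff_stateSat {α : Type} (M : LCModel α) (A : PForm α)
    (p : Wc M) :
    Lsat (Rc M) (Vc M) p A ↔ stateSat M.l M.V p.1.1 A := by
  constructor
  · intro h w' hw'
    have := h ⟨(p.1.1, w'), hw'⟩ rfl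
    exact (sat_Vc M _ A).mp this
  · intro h q hq
    exact (sat_Vc M q A).mpr (h q.1.2 (hq ▸ q.2))

/-- `s ∈ Min_<(A)` among states iff `(s,w) ∈ Min_{<'}(LA)` in the
constructed model, for every `w ∈ l(s)`. -/
theorem min_state_iff_min_L {α : Type} (M : LCModel α) (A : PForm α)
    (s : M.S) (w : M.W) (hw : w ∈ M.l s) :
    minW M.lt (fun s' => stateSat M.l M.V s' A) s ↔
      minW (ltc M) (fun p => Lsat (Rc M) (Vc M) p A) ⟨(s, w), hw⟩ := by
  constructor
  · rintro ⟨hs, hmin⟩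
    refine ⟨(Lsat_iff_stateSat M A _).mpr hs, ?_⟩
    intro q hq hLq
    exact hmin q.1.1 hq ((Lsat_iff_stateSat M A q).mp hLq)
  · rintro ⟨hL, hmin⟩
    refine ⟨(Lsat_iff_stateSat M A _).mp hL, ?_⟩
    intro s' hs' hA
    obtain ⟨w', hw'⟩ := M.l_ne s'
    exact hmin ⟨(s', w'), hw'⟩ hs' ((Lsat_iff_stateSat M A ⟨(s', w'), hw'⟩).mpr hA)
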